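/- arXiv:1604.03300 — 10 statements merged into one kernel-verified Lean document; each statement's English description precedes it below -/
import Mathlib

section
/- Let (A,R,S,ω) be a curved Rota-Baxter system over a commutative ring K, and define a new binary operation on A by a * b = R(a)b + aS(b). Then the operation * is associative if and only if for all a,b,c ∈ A one has a·ω(b,c) = ω(a,b)·c. -/
/-- For a curved Rota-Baxter system `(A, R, S, ω)`, the product
`a * b = R(a)b + aS(b)` is associative iff `a·ω(b,c) = ω(a,b)·c` for all `a,b,c`. -/
theorem curved_RB_star_assoc_iff {K A : Type*} [CommRing K] [NonUnitalRing A]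
    [Module K A] [SMulCommClass K A A] [IsScalarTower K A A]
    (R S : A →ₗ[K] A) (ω : A →ₗ[K] A →ₗ[K] A)
    (hR : ∀ a b : A, R a * R b = R (R a * b + a * S b) + ω a b)
    (hS : ∀ a b : A, S a * S b = S (R a * b + a * S b) + ω a b)
    (star : A → A → A) (hstar : ∀ a b : A, star a b = R a * b + a * S b) :
    (∀ a b c : A, star (star a b) c = star a (star b c)) ↔
      (∀ a b c : A, a * ω b c = ω a b * c) := by
  have key : ∀ a b c : A,
      star (star a b) c - star a (star b c) = a * ω b c - ω a b * c := by
    intro a b c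
    have e1 : R (R a * b + a * S b) = R a * R b - ω a b :=
      (eq_sub_of_add_eq (hR a b).symm)
    have e2 : S (R b * c + b * S c) = S b * S c - ω b c :=
      (eq_sub_of_add_eq (hS b c).symm)
    simp only [hstar]; rw [e1, e2]
    noncomm_ring
  constructor
  · intro h a b c
    have := key a b c
    rw [h a b c, sub_self] at this
    exact (sub_eq_zero.mp this.symm)
  · intro h a b c
    have := key a b c
    rw [h a b c, sub_self] at this
    exact sub_eq_zero.mp this
end

section
/- Let (A,R,S,ω) be a curved Rota-Baxter system over a commutative ring K, where A is a unital associative algebra, and define a * b = R(a)b + aS(b). Then * is an associative product on A if and only if there exists a central element κ ∈ A such that ω(a,b) = κab for all a,b ∈ A. -/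
/-- For a curved Rota-Baxter system `(A, R, S, ω)` with `A` unital,
the product `a * b = R(a)b + aS(b)` is associative iff there is a central `κ`
with `ω(a,b) = κab`. -/
theorem curved_RB_star_assoc_iff_central {K A : Type*} [CommRing K] [Ring A]
    [Algebra K A]
    (R S : A →ₗ[K] A) (ω : A →ₗ[K] A →ₗ[K] A)
    (hR : ∀ a b : A, R a * R b = R (R a * b + a * S b) + ω a b)
    (hS : ∀ a b : A, S a * S b = S (R a * b + a * S b) + ω a b)
    (star : A → A → A) (hstar : ∀ a b : A, star a b = R a * b + a * S b) :
    (∀ a b c : A, star (star a b) c = star a (star b c)) ↔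
      (∃ κ : A, (∀ a : A, κ * a = a * κ) ∧ ∀ a b : A, ω a b = κ * (a * b)) := by
  have key : ∀ a b c : A,
      star (star a b) c - star a (star b c) = a * (ω b c) - (ω a b) * c := by
    intro a b c
    have e1 : R (R a * b + a * S b) = R a * R b - ω a b :=
      eq_sub_of_add_eq (hR a b).symm
    have e2 : S (R b * c + b * S c) = S b * S c - ω b c :=
      eq_sub_of_add_eq (hS b c).symm
    rw [hstar (star a b) c, hstar a (star b c), hstar a b, hstar b c, e1, e2]
    noncomm_ring
  constructor
  · intro h
    have hw : ∀ a b c : A, (ω a b) * c = a * (ω b c) := by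
      intro a b c
      have h0 := key a b c
      rw [h a b c, sub_self] at h0
      exact ((sub_eq_zero.mp h0.symm).symm)
    refine ⟨ω 1 1, ?_, ?_⟩
    · intro a
      have h1 : (ω 1 1 : A) * a = ω 1 a := by
        have := hw 1 1 a; rwa [one_mul] at this
      have h2 : ω a 1 = a * ω 1 1 := by
        have := hw a 1 1; rwa [mul_one] at this
      have h3 : ω 1 a = ω a 1 := by
        have := hw 1 a 1; rwa [mul_one, one_mul] at this
      rw [h1, h3, h2]
    · intro a b
      have h1 : (ω 1 a : A) * b = ω a b := by
        have := hw 1 a b; rwa [one_mul] at this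
      have h2 : (ω 1 1 : A) * a = ω 1 a := by
        have := hw 1 1 a; rwa [one_mul] at this
      rw [← h1, ← h2, mul_assoc]
  · rintro ⟨κ, hc, hω⟩ a b c
    have h0 := key a b c
    have : a * (ω b c) - (ω a b) * c = 0 := by
      rw [hω, hω]
      have : a * (κ * (b * c)) = a * κ * (b * c) := by rw [mul_assoc]
      rw [this, ← hc a]
      noncomm_ring
    rw [this] at h0
    exact sub_eq_zero.mp h0
end

section
/- Let A be an associative algebra over a commutative ring K with multiplication map μ : A ⊗ A → A, and let T : A ⊗ A → A ⊗ A be a curved weak pseudotwistor with weak companion 𝒯 : A ⊗ A ⊗ A → A ⊗ A ⊗ A and curvature ω : A ⊗ A → A. Then the composite μ ∘ T is an associative product on A. -/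
open TensorProduct

/-- If `T : A ⊗ A → A ⊗ A` is a curved weak pseudotwistor with weak
companion `𝒯` and curvature `ω`, then `μ ∘ T` is an associative product on `A`. -/
theorem curved_weak_pseudotwistor_assoc {K A : Type*} [CommRing K] [NonUnitalRing A]
    [Module K A] [SMulCommClass K A A] [IsScalarTower K A A]
    (T : A ⊗[K] A →ₗ[K] A ⊗[K] A)
    (cT : A ⊗[K] (A ⊗[K] A) →ₗ[K] A ⊗[K] (A ⊗[K] A))
    (ω : A ⊗[K] A →ₗ[K] A)
    -- (i)  T ∘ (id ⊗ μ) ∘ (id ⊗ T) = (id ⊗ μ) ∘ 𝒯 − id ⊗ ω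
    (h1 : T ∘ₗ (LinearMap.mul' K A).lTensor A ∘ₗ T.lTensor A
        = (LinearMap.mul' K A).lTensor A ∘ₗ cT - ω.lTensor A)
    -- (ii) T ∘ (μ ⊗ id) ∘ (T ⊗ id) = (μ ⊗ id) ∘ 𝒯 − ω ⊗ id
    (h2 : T ∘ₗ (LinearMap.mul' K A).rTensor A ∘ₗ T.rTensor A
            ∘ₗ (TensorProduct.assoc K A A A).symm.toLinearMap
        = ((LinearMap.mul' K A).rTensor A
            ∘ₗ (TensorProduct.assoc K A A A).symm.toLinearMap) ∘ₗ cT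
          - ω.rTensor A ∘ₗ (TensorProduct.assoc K A A A).symm.toLinearMap)
    -- (iii) μ ∘ (id ⊗ ω) = μ ∘ (ω ⊗ id)
    (h3 : LinearMap.mul' K A ∘ₗ ω.lTensor A
        = LinearMap.mul' K A ∘ₗ ω.rTensor A
            ∘ₗ (TensorProduct.assoc K A A A).symm.toLinearMap)
    (m : A → A → A) (hm : ∀ a b : A, m a b = LinearMap.mul' K A (T (a ⊗ₜ[K] b))) :
    ∀ a b c : A, m (m a b) c = m a (m b c) := by

  have key : (LinearMap.mul' K A) ∘ₗ (LinearMap.mul' K A).lTensor A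
      = (LinearMap.mul' K A) ∘ₗ (LinearMap.mul' K A).rTensor A
          ∘ₗ (TensorProduct.assoc K A A A).symm.toLinearMap := by
    ext x y z
    simp [mul_assoc]
  intro a b c
  set t := a ⊗ₜ[K] (b ⊗ₜ[K] c) with ht
  have H1 := congrArg (LinearMap.mul' K A) (LinearMap.congr_fun h1 t)
  have H2 := congrArg (LinearMap.mul' K A) (LinearMap.congr_fun h2 t)
  have H3 := LinearMap.congr_fun h3 t
  have HK := LinearMap.congr_fun key (cT t)
  simp only [LinearMap.comp_apply, LinearMap.sub_apply, map_sub, ht,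
    LinearEquiv.coe_coe, TensorProduct.assoc_symm_tmul, LinearMap.lTensor_tmul,
    LinearMap.rTensor_tmul, LinearMap.mul'_apply] at H1 H2 H3 HK
  simp only [hm]
  rw [H1, H2, HK, H3]
end

section
/- Let (A,R,S,ω) be a curved Rota-Baxter system over a commutative ring K whose curvature satisfies a·ω(b,c) = ω(a,b)·c for all a,b,c ∈ A. Define K-linear maps T : A ⊗ A → A ⊗ A by T(a ⊗ b) = R(a) ⊗ b + a ⊗ S(b) and 𝒯 : A ⊗ A ⊗ A → A ⊗ A ⊗ A by 𝒯(a ⊗ b ⊗ c) = R(a) ⊗ R(b) ⊗ c + R(a) ⊗ b ⊗ S(c) + a ⊗ S(b) ⊗ S(c). Then T is a curved weak pseudotwistor with weak companion 𝒯 and curvature ω; that is, T ∘ (id ⊗ μ) ∘ (id ⊗ T) = (id ⊗ μ) ∘ 𝒯 − id ⊗ ω, T ∘ (μ ⊗ id) ∘ (T ⊗ id) = (μ ⊗ id) ∘ 𝒯 − ω ⊗ id, and μ ∘ (id ⊗ ω) = μ ∘ (ω ⊗ id), where μ denotes the multiplication of A. -/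
open TensorProduct

/-- For a curved Rota-Baxter system `(A, R, S, ω)` whose curvature
satisfies `a·ω(b⊗c) = ω(a⊗b)·c`, the map `T(a⊗b) = R(a)⊗b + a⊗S(b)` is a curved
weak pseudotwistor with weak companion
`𝒯(a⊗b⊗c) = R(a)⊗R(b)⊗c + R(a)⊗b⊗S(c) + a⊗S(b)⊗S(c)` and curvature `ω`. -/
theorem curved_RB_gives_pseudotwistor {K A : Type*} [CommRing K] [NonUnitalRing A]
    [Module K A] [SMulCommClass K A A] [IsScalarTower K A A]
    (R S : A →ₗ[K] A) (ω : A ⊗[K] A →ₗ[K] A)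
    (hR : ∀ a b : A, R a * R b = R (R a * b + a * S b) + ω (a ⊗ₜ[K] b))
    (hS : ∀ a b : A, S a * S b = S (R a * b + a * S b) + ω (a ⊗ₜ[K] b))
    (hass : ∀ a b c : A, a * ω (b ⊗ₜ[K] c) = ω (a ⊗ₜ[K] b) * c)
    (T : A ⊗[K] A →ₗ[K] A ⊗[K] A)
    (hT : ∀ a b : A, T (a ⊗ₜ[K] b) = R a ⊗ₜ[K] b + a ⊗ₜ[K] S b)
    (cT : A ⊗[K] (A ⊗[K] A) →ₗ[K] A ⊗[K] (A ⊗[K] A))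
    (hcT : ∀ a b c : A,
      cT (a ⊗ₜ[K] (b ⊗ₜ[K] c))
        = R a ⊗ₜ[K] (R b ⊗ₜ[K] c) + R a ⊗ₜ[K] (b ⊗ₜ[K] S c)
          + a ⊗ₜ[K] (S b ⊗ₜ[K] S c)) :
    -- (i)  T ∘ (id ⊗ μ) ∘ (id ⊗ T) = (id ⊗ μ) ∘ 𝒯 − id ⊗ ω
    (T ∘ₗ (LinearMap.mul' K A).lTensor A ∘ₗ T.lTensor A
        = (LinearMap.mul' K A).lTensor A ∘ₗ cT - ω.lTensor A)
    -- (ii) T ∘ (μ ⊗ id) ∘ (T ⊗ id) = (μ ⊗ id) ∘ 𝒯 − ω ⊗ id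
    ∧ (T ∘ₗ (LinearMap.mul' K A).rTensor A ∘ₗ T.rTensor A
            ∘ₗ (TensorProduct.assoc K A A A).symm.toLinearMap
        = ((LinearMap.mul' K A).rTensor A
            ∘ₗ (TensorProduct.assoc K A A A).symm.toLinearMap) ∘ₗ cT
          - ω.rTensor A ∘ₗ (TensorProduct.assoc K A A A).symm.toLinearMap)
    -- (iii) μ ∘ (id ⊗ ω) = μ ∘ (ω ⊗ id)
    ∧ (LinearMap.mul' K A ∘ₗ ω.lTensor A
        = LinearMap.mul' K A ∘ₗ ω.rTensor A
            ∘ₗ (TensorProduct.assoc K A A A).symm.toLinearMap) := by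
  refine ⟨?_, ?_, ?_⟩ <;> ext a b c <;>
    simp only [LinearMap.comp_apply, LinearMap.sub_apply, LinearEquiv.coe_coe,
      AlgebraTensorModule.curry_apply, TensorProduct.curry_apply,
      LinearMap.coe_restrictScalars, LinearMap.lTensor_tmul, LinearMap.rTensor_tmul,
      TensorProduct.assoc_symm_tmul, hT, hcT, map_add, LinearMap.mul'_apply,
      TensorProduct.tmul_add, TensorProduct.add_tmul, hR, hS,
      TensorProduct.tmul_sub, TensorProduct.sub_tmul, hass]
  · abel
  · abel
end

section
/- Let (A,R,R,ω) be a curved Rota-Baxter system (with both Rota-Baxter operators equal) over a commutative ring K, where ω : A × A → A is an A-bimodule map (ω(ab,c) = aω(b,c), ω(a,bc) = ω(a,b)c) satisfying a·ω(b,c) = ω(a,b)·c for all a,b,c ∈ A. Let a * b = R(a)b + aR(b). Then for all a,b,c ∈ A: R(a)ω(b,c) − ω(a*b,c) + ω(a,b*c) − ω(a,b)R(c) = 0 (i.e., d(ω) = 0, where ω is viewed as a 2-cochain and d is the differential d(f)(a,b,c) = R(a)f(b,c) − f(a*b,c) + f(a,b*c) − f(a,b)R(c)). -/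
/-- For a curved Rota-Baxter system `(A,R,R,ω)` with `ω` an `A`-bimodule
map satisfying `a·ω(b,c) = ω(a,b)·c`, the curvature is closed: `d(ω) = 0`, i.e.
`R(a)ω(b,c) − ω(a*b,c) + ω(a,b*c) − ω(a,b)R(c) = 0` where `a*b = R(a)b + aR(b)`. -/
theorem curved_RB_domega_eq_zero {K A : Type*} [CommRing K] [NonUnitalRing A]
    [Module K A] [SMulCommClass K A A] [IsScalarTower K A A]
    (R : A →ₗ[K] A) (ω : A →ₗ[K] A →ₗ[K] A)
    (hRB : ∀ a b : A, R a * R b = R (R a * b + a * R b) + ω a b)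
    (hbimod₁ : ∀ a b c : A, ω (a * b) c = a * ω b c)
    (hbimod₂ : ∀ a b c : A, ω a (b * c) = ω a b * c)
    (hass : ∀ a b c : A, a * ω b c = ω a b * c)
    (star : A → A → A) (hstar : ∀ a b : A, star a b = R a * b + a * R b) :
    ∀ a b c : A,
      R a * ω b c - ω (star a b) c + ω a (star b c) - ω a b * R c = 0 := by
  intro a b c
  simp only [hstar, map_add, LinearMap.add_apply, hbimod₁, hbimod₂, hass]
  abel
end

section
/- Let (A,R,S,ω) be a curved Rota-Baxter system over a commutative ring K and define the binary operation a ∘ b = R(a)b − bS(a). Then (A,∘) is a left pre-Lie algebra (i.e., (a∘b − b∘a)∘c = a∘(b∘c) − b∘(a∘c) for all a,b,c ∈ A) if and only if the element ω(a,b) − ω(b,a) lies in the centre of A for all a,b ∈ A. -/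
/-- For a curved Rota-Baxter system `(A,R,S,ω)`, the operation
`a ∘ b = R(a)b − bS(a)` makes `A` a left pre-Lie algebra iff
`ω(a,b) − ω(b,a)` is central for all `a, b`. -/
theorem curved_RB_preLie_iff {K A : Type*} [CommRing K] [NonUnitalRing A]
    [Module K A] [SMulCommClass K A A] [IsScalarTower K A A]
    (R S : A →ₗ[K] A) (ω : A →ₗ[K] A →ₗ[K] A)
    (hR : ∀ a b : A, R a * R b = R (R a * b + a * S b) + ω a b)
    (hS : ∀ a b : A, S a * S b = S (R a * b + a * S b) + ω a b)
    (circ : A → A → A) (hcirc : ∀ a b : A, circ a b = R a * b - b * S a) :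
    (∀ a b c : A,
        circ (circ a b - circ b a) c = circ a (circ b c) - circ b (circ a c)) ↔
      (∀ a b c : A, (ω a b - ω b a) * c = c * (ω a b - ω b a)) := by
  have key : ∀ a b c : A,
      circ (circ a b - circ b a) c - (circ a (circ b c) - circ b (circ a c))
        = c * (ω a b - ω b a) - (ω a b - ω b a) * c := by
    intro a b c
    have hd : circ a b - circ b a = (R a * b + a * S b) - (R b * a + b * S a) := by
      rw [hcirc, hcirc]; noncomm_ring
    have hRd : R (circ a b - circ b a)
        = R a * R b - R b * R a - (ω a b - ω b a) := by
      rw [hd, map_sub, eq_sub_of_add_eq (hR a b).symm, eq_sub_of_add_eq (hR b a).symm]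
      noncomm_ring
    have hSd : S (circ a b - circ b a)
        = S a * S b - S b * S a - (ω a b - ω b a) := by
      rw [hd, map_sub, eq_sub_of_add_eq (hS a b).symm, eq_sub_of_add_eq (hS b a).symm]
      noncomm_ring
    rw [hcirc (circ a b - circ b a) c, hRd, hSd, hcirc a (circ b c),
      hcirc b (circ a c), hcirc b c, hcirc a c]
    noncomm_ring
  constructor
  · intro h a b c
    have hk := key a b c
    rw [h a b c, sub_self] at hk
    have := (sub_eq_zero.mp hk.symm)
    exact this.symm
  · intro h a b c
    have hk := key a b c
    rw [← h a b c, sub_self] at hk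
    exact sub_eq_zero.mp hk
end

section
/- Let (A,R,S,ω) be a curved Rota-Baxter system over a commutative ring K whose curvature is symmetric, i.e., ω(a,b) = ω(b,a) for all a,b ∈ A. Then A with the operation a ∘ b = R(a)b − bS(a) is a left pre-Lie algebra: (a∘b − b∘a)∘c = a∘(b∘c) − b∘(a∘c) for all a,b,c ∈ A. -/
/-- For a curved Rota-Baxter system `(A,R,S,ω)` with symmetric
curvature, `a ∘ b = R(a)b − bS(a)` makes `A` a left pre-Lie algebra. -/
theorem curved_RB_symmetric_preLie {K A : Type*} [CommRing K] [NonUnitalRing A]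
    [Module K A] [SMulCommClass K A A] [IsScalarTower K A A]
    (R S : A →ₗ[K] A) (ω : A →ₗ[K] A →ₗ[K] A)
    (hR : ∀ a b : A, R a * R b = R (R a * b + a * S b) + ω a b)
    (hS : ∀ a b : A, S a * S b = S (R a * b + a * S b) + ω a b)
    (hsymm : ∀ a b : A, ω a b = ω b a)
    (circ : A → A → A) (hcirc : ∀ a b : A, circ a b = R a * b - b * S a) :
    ∀ a b c : A,
      circ (circ a b - circ b a) c = circ a (circ b c) - circ b (circ a c) := by
  intro a b c
  have hR' : ∀ x y : A, R (R x * y + x * S y) = R x * R y - ω x y := fun x y => by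
    rw [hR x y]; abel
  have hS' : ∀ x y : A, S (R x * y + x * S y) = S x * S y - ω x y := fun x y => by
    rw [hS x y]; abel
  simp only [hcirc]
  have e : R a * b - b * S a - (R b * a - a * S b)
      = (R a * b + a * S b) - (R b * a + b * S a) := by abel
  rw [e, map_sub, map_sub, hR', hR', hS', hS', hsymm a b]
  noncomm_ring
end

section
/- Let (A,R,S,ω) be a curved Rota-Baxter system over a commutative ring K and define a ∘ b = R(a)b − bS(a). Then for all a,b,c ∈ A: (a∘b − b∘a)∘c = (R(a)R(b) − R(b)R(a))c − c(S(a)S(b) − S(b)S(a)) + [c, ω(a,b) − ω(b,a)], where [x,y] = xy − yx denotes the commutator. -/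
/-- For a curved Rota-Baxter system `(A,R,S,ω)` and
`a ∘ b = R(a)b − bS(a)`, one has
`(a∘b − b∘a)∘c = (R(a)R(b) − R(b)R(a))c − c(S(a)S(b) − S(b)S(a)) + [c, ω(a,b) − ω(b,a)]`. -/
theorem curved_RB_preLie_lhs_formula {K A : Type*} [CommRing K] [NonUnitalRing A]
    [Module K A] [SMulCommClass K A A] [IsScalarTower K A A]
    (R S : A →ₗ[K] A) (ω : A →ₗ[K] A →ₗ[K] A)
    (hR : ∀ a b : A, R a * R b = R (R a * b + a * S b) + ω a b)
    (hS : ∀ a b : A, S a * S b = S (R a * b + a * S b) + ω a b)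
    (circ : A → A → A) (hcirc : ∀ a b : A, circ a b = R a * b - b * S a) :
    ∀ a b c : A,
      circ (circ a b - circ b a) c
        = (R a * R b - R b * R a) * c - c * (S a * S b - S b * S a)
          + (c * (ω a b - ω b a) - (ω a b - ω b a) * c) := by
  intro a b c
  have key : (R a * b - b * S a - (R b * a - a * S b))
      = (R a * b + a * S b) - (R b * a + b * S a) := by abel
  simp only [hcirc, key, map_sub]
  have h1 : R (R a * b + a * S b) = R a * R b - ω a b := by
    rw [hR a b]; abel
  have h2 : R (R b * a + b * S a) = R b * R a - ω b a := by
    rw [hR b a]; abel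
  have h3 : S (R a * b + a * S b) = S a * S b - ω a b := by
    rw [hS a b]; abel
  have h4 : S (R b * a + b * S a) = S b * S a - ω b a := by
    rw [hS b a]; abel
  rw [h1, h2, h3, h4]
  noncomm_ring
end

section
/- Let A be an associative algebra over a commutative ring K, R : A → A a K-linear map, λ ∈ K, and set S = R + λ·id and ω = 0. Then (A,R,S,ω) is a curved Rota-Baxter system if and only if R is a Rota-Baxter operator of weight λ, i.e., R(a)R(b) = R(R(a)b + aR(b) + λab) for all a,b ∈ A. -/
/-- With `S = R + λ·id` and `ω = 0`, `(A,R,S,ω)` is a curved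
Rota-Baxter system iff `R` is a Rota-Baxter operator of weight `λ`. -/
theorem curved_RB_iff_weight_lam {K A : Type*} [CommRing K] [NonUnitalRing A]
    [Module K A] [SMulCommClass K A A] [IsScalarTower K A A]
    (R : A →ₗ[K] A) (lam : K)
    (S : A →ₗ[K] A) (hSdef : ∀ a : A, S a = R a + lam • a)
    (ω : A →ₗ[K] A →ₗ[K] A) (hω : ∀ a b : A, ω a b = 0) :
    ((∀ a b : A, R a * R b = R (R a * b + a * S b) + ω a b) ∧
        (∀ a b : A, S a * S b = S (R a * b + a * S b) + ω a b)) ↔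
      (∀ a b : A, R a * R b = R (R a * b + a * R b + lam • (a * b))) := by
  have key : ∀ a b : A, R a * b + a * S b = R a * b + a * R b + lam • (a * b) := by
    intro a b
    rw [hSdef, mul_add, mul_smul_comm, add_assoc]
  constructor
  · rintro ⟨h1, _⟩ a b
    have := h1 a b
    rw [hω, add_zero, key] at this
    exact this
  · intro h
    constructor
    · intro a b
      rw [hω, add_zero, key]
      exact h a b
    · intro a b
      have e : lam • a * lam • b = (lam * lam) • (a * b) := by
        rw [smul_mul_assoc, mul_smul_comm, smul_smul]
      rw [hω, add_zero, key, hSdef a, hSdef b, hSdef, map_add, map_add, map_smul,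
        add_mul, mul_add, mul_add, h a b, smul_mul_assoc, mul_smul_comm, e]
      simp only [map_add, map_smul]
      module
end

section
/- Let A be an associative algebra over a commutative ring K and let r = Σᵢ rᵢ¹ ⊗ rᵢ², s = Σⱼ sⱼ¹ ⊗ sⱼ² ∈ A ⊗ A be A-centralizing elements. Define R(a) = Σᵢ rᵢ¹ a rᵢ², S(a) = Σⱼ sⱼ¹ a sⱼ², and ω(a,b) = −Σᵢⱼ rᵢ¹ a rᵢ² sⱼ¹ b sⱼ². Then (A,R,S,ω) is a curved Rota-Baxter system: R(a)R(b) = R(R(a)b + aS(b)) + ω(a,b) and S(a)S(b) = S(R(a)b + aS(b)) + ω(a,b) for all a,b ∈ A. -/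
open TensorProduct

/-- For `x = Σᵢ xᵢ¹ ⊗ xᵢ² ∈ A ⊗ A` and `a ∈ A`, the element `Σᵢ xᵢ¹ a xᵢ²`. -/
noncomputable def midMul {K A : Type*} [CommRing K] [NonUnitalRing A] [Module K A]
    [SMulCommClass K A A] [IsScalarTower K A A] (x : A ⊗[K] A) (a : A) : A :=
  LinearMap.mul' K A ((LinearMap.mulRight K a).rTensor A x)

section Aux

variable {K A : Type*} [CommRing K] [NonUnitalRing A] [Module K A]
    [SMulCommClass K A A] [IsScalarTower K A A]

lemma midMul_tmul (p q a : A) : midMul (p ⊗ₜ[K] q) a = p * a * q := by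
  simp [midMul]

lemma midMul_add_left (x y : A ⊗[K] A) (a : A) :
    midMul (x + y) a = midMul x a + midMul y a := by
  simp [midMul]

lemma midMul_add_right (x : A ⊗[K] A) (a b : A) :
    midMul x (a + b) = midMul x a + midMul x b := by
  induction x using TensorProduct.induction_on with
  | zero => simp [midMul]
  | tmul p q => simp [midMul_tmul, mul_add, add_mul]
  | add x y hx hy => simp [midMul_add_left, hx, hy, add_add_add_comm]

lemma midMul_rTensor_mulLeft (c a : A) (x : A ⊗[K] A) :
    midMul ((LinearMap.mulLeft K c).rTensor A x) a = c * midMul x a := by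
  induction x using TensorProduct.induction_on with
  | zero => simp [midMul]
  | tmul p q => simp [midMul_tmul, mul_assoc]
  | add x y hx hy => simp [map_add, midMul_add_left, hx, hy, mul_add]

lemma midMul_lTensor_mulRight (c a : A) (x : A ⊗[K] A) :
    midMul ((LinearMap.mulRight K c).lTensor A x) a = midMul x a * c := by
  induction x using TensorProduct.induction_on with
  | zero => simp [midMul]
  | tmul p q => simp [midMul_tmul, mul_assoc]
  | add x y hx hy => simp [map_add, midMul_add_left, hx, hy, add_mul]

lemma midMul_central (r : A ⊗[K] A)
    (hr : ∀ a : A,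
      (LinearMap.mulLeft K a).rTensor A r = (LinearMap.mulRight K a).lTensor A r)
    (a c : A) : c * midMul r a = midMul r a * c := by
  have h := congrArg (fun x => midMul x a) (hr c)
  simpa [midMul_rTensor_mulLeft, midMul_lTensor_mulRight] using h

lemma midMul_mul_left (x : A ⊗[K] A) (c a : A) (hc : ∀ t : A, c * t = t * c) :
    midMul x (c * a) = c * midMul x a := by
  induction x using TensorProduct.induction_on with
  | zero => simp [midMul]
  | tmul p q =>
      simp only [midMul_tmul]
      rw [← mul_assoc, ← hc p, mul_assoc, mul_assoc, mul_assoc]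
  | add x y hx hy => simp [midMul_add_left, hx, hy, mul_add]

lemma midMul_mul_right (x : A ⊗[K] A) (c a : A) (hc : ∀ t : A, c * t = t * c) :
    midMul x (a * c) = midMul x a * c := by
  induction x using TensorProduct.induction_on with
  | zero => simp [midMul]
  | tmul p q =>
      simp only [midMul_tmul]
      rw [← mul_assoc p a c, mul_assoc (p * a) c q, hc q, ← mul_assoc]
  | add x y hx hy => simp [midMul_add_left, hx, hy, add_mul]

end Aux

/-- If `r, s ∈ A ⊗ A` are `A`-centralizing, then
`R(a) = Σᵢ rᵢ¹ a rᵢ²`, `S(a) = Σⱼ sⱼ¹ a sⱼ²` and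
`ω(a,b) = −Σᵢⱼ rᵢ¹ a rᵢ² sⱼ¹ b sⱼ² = −R(a)S(b)` form a curved Rota-Baxter system. -/
theorem centralizing_curved_RB {K A : Type*} [CommRing K] [NonUnitalRing A]
    [Module K A] [SMulCommClass K A A] [IsScalarTower K A A]
    (r s : A ⊗[K] A)
    (hr : ∀ a : A,
      (LinearMap.mulLeft K a).rTensor A r = (LinearMap.mulRight K a).lTensor A r)
    (hs : ∀ a : A,
      (LinearMap.mulLeft K a).rTensor A s = (LinearMap.mulRight K a).lTensor A s) :
    (∀ a b : A,
        midMul r a * midMul r b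
          = midMul r (midMul r a * b + a * midMul s b)
            + -(midMul r a * midMul s b)) ∧
      (∀ a b : A,
        midMul s a * midMul s b
          = midMul s (midMul r a * b + a * midMul s b)
            + -(midMul r a * midMul s b)) := by
  have hRc : ∀ a c : A, midMul r a * c = c * midMul r a :=
    fun a c => (midMul_central r hr a c).symm
  have hSc : ∀ a c : A, midMul s a * c = c * midMul s a :=
    fun a c => (midMul_central s hs a c).symm
  constructor
  · intro a b
    rw [midMul_add_right,
      midMul_mul_left r (midMul r a) b (hRc a),
      midMul_mul_right r (midMul s b) a (hSc b)]
    abel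
  · intro a b
    rw [midMul_add_right,
      midMul_mul_left s (midMul r a) b (hRc a),
      midMul_mul_right s (midMul s b) a (hSc b)]
    abel
end
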